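/- arXiv:1911.06665 — 2 statements merged into one kernel-verified Lean document; each statement's English description precedes it below -/
import Mathlib

section
/- With F₀ = [[𝐀, 0], [(𝐀̃ − I)C, 𝐀̃]] and B₀ = [I; 0] as above (𝐀 row stochastic ⊗ I_d, 𝐀̃ column stochastic ⊗ I_d), any row vector wᵀ satisfying wᵀ[F₀ − I, B₀] = 0 is a linear combination of the rows of [0, 𝟏ᵀ ⊗ I_d]; i.e., the left kernel of [F₀ − I, B₀] has dimension exactly d and is spanned by the rows of [0, 𝟏_Nᵀ ⊗ I_d]. -/
/-!
The condition `w B₀ = 0` says exactly that the first block `w₁` of `w` vanishes. What remains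
of `w (F₀ - 1) = 0` is `w₂ 𝐀̃ = w₂` together with `w₂ (𝐀̃ - 1) C = 0`, and the latter follows
from the former whatever `C` is. Since `𝐀̃ = Ã ⊗ I_d` acts on each of the `d` coordinate slices
of `w₂` separately, `w₂ 𝐀̃ = w₂` means every slice is a left fixed vector of `Ã`, i.e. constant.
-/

open Matrix Kronecker

section

variable {R ι κ : Type*} [Fintype ι]

theorem vecMul_kronecker_one_apply [CommSemiring R] [Fintype κ] [DecidableEq κ]
    (M : Matrix ι ι R) (v : ι × κ → R) (j : ι) (l : κ) :
    (v ᵥ* (M ⊗ₖ (1 : Matrix κ κ R))) (j, l) = ((fun i => v (i, l)) ᵥ* M) j := by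
  simp only [vecMul, dotProduct, Fintype.sum_prod_type, kroneckerMap_apply, one_apply,
    mul_ite, mul_one, mul_zero, Finset.sum_ite_eq', Finset.mem_univ, if_true]

theorem vecMul_kronecker_one_eq_self_iff [CommSemiring R] [Fintype κ] [DecidableEq κ]
    (M : Matrix ι ι R) (v : ι × κ → R) :
    v ᵥ* (M ⊗ₖ (1 : Matrix κ κ R)) = v ↔
      ∀ l, (fun i => v (i, l)) ᵥ* M = fun i => v (i, l) := by
  simp only [funext_iff, Prod.forall, vecMul_kronecker_one_apply]
  exact forall_comm

theorem vecMul_eq_self_iff_exists_const [CommSemiring R] (M : Matrix ι ι R)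
    (hcol : ∀ j, ∑ i, M i j = 1)
    (hsimple : ∀ v : ι → R, v ᵥ* M = v → ∃ c : R, v = fun _ => c) (v : ι → R) :
    v ᵥ* M = v ↔ ∃ c : R, v = fun _ => c := by
  refine ⟨hsimple v, ?_⟩
  rintro ⟨c, rfl⟩
  ext j
  simp only [vecMul, dotProduct, ← Finset.mul_sum, hcol, mul_one]

end

theorem vecMul_fromBlocks_sub_one_and_fromRows_eq_zero_iff {R n : Type*} [Ring R] [Fintype n]
    [DecidableEq n] (P M C : Matrix n n R) (w : n ⊕ n → R) :
    (w ᵥ* (fromBlocks P 0 ((M - 1) * C) M - 1) = 0 ∧ w ᵥ* fromRows (1 : Matrix n n R) 0 = 0) ↔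
      w ∘ Sum.inl = 0 ∧ (w ∘ Sum.inr) ᵥ* M = w ∘ Sum.inr := by
  rw [vecMul_sub, vecMul_one, sub_eq_zero, vecMul_fromBlocks, vecMul_fromRows]
  simp only [vecMul_one, vecMul_zero, add_zero, zero_add]
  constructor
  · rintro ⟨hF, hw₁⟩
    refine ⟨hw₁, ?_⟩
    simpa [hw₁] using congrArg (· ∘ Sum.inr) hF
  · rintro ⟨hw₁, hw₂⟩
    have hQ : (w ∘ Sum.inr) ᵥ* ((M - 1) * C) = 0 := by
      rw [← vecMul_vecMul, vecMul_sub, vecMul_one, hw₂, sub_self, zero_vecMul]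
    refine ⟨?_, hw₁⟩
    rw [hw₁, hQ, hw₂, zero_vecMul, add_zero, ← hw₁, Sum.elim_comp_inl_inr]

theorem exists_eq_sumElim_zero_iff {R α ι κ : Type*} [Zero R] (w : α ⊕ ι × κ → R) :
    (∃ c : κ → R, w = Sum.elim (0 : α → R) (fun p => c p.2)) ↔
      w ∘ Sum.inl = 0 ∧ ∀ l, ∃ c : R, (fun i => w (Sum.inr (i, l))) = fun _ => c := by
  rw [Classical.skolem]
  constructor
  · rintro ⟨c, rfl⟩
    exact ⟨rfl, c, fun _ => rfl⟩
  · rintro ⟨hw₁, c, hc⟩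
    refine ⟨c, ?_⟩
    ext (a | ⟨i, l⟩)
    · exact congrFun hw₁ a
    · exact congrFun (hc l) i

theorem stmt8_general (N d : ℕ)
    (Atil : Matrix (Fin N) (Fin N) ℝ)
    (hcol : ∀ j, ∑ i, Atil i j = 1)
    (hAtilsimple : ∀ v : Fin N → ℝ, Matrix.vecMul v Atil = v →
      ∃ c : ℝ, v = fun _ => c)
    (C : Matrix (Fin N × Fin d) (Fin N × Fin d) ℝ)
    (bA bAtil : Matrix (Fin N × Fin d) (Fin N × Fin d) ℝ)
    (hbAtil : bAtil = Atil ⊗ₖ (1 : Matrix (Fin d) (Fin d) ℝ))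
    (F₀ : Matrix ((Fin N × Fin d) ⊕ (Fin N × Fin d))
        ((Fin N × Fin d) ⊕ (Fin N × Fin d)) ℝ)
    (hF₀ : F₀ = Matrix.fromBlocks bA 0 ((bAtil - 1) * C) bAtil)
    (B₀ : Matrix ((Fin N × Fin d) ⊕ (Fin N × Fin d)) (Fin N × Fin d) ℝ)
    (hB₀ : B₀ = Matrix.fromRows 1 0) :
    ∀ w : ((Fin N × Fin d) ⊕ (Fin N × Fin d)) → ℝ,
      (Matrix.vecMul w (F₀ - 1) = 0 ∧ Matrix.vecMul w B₀ = 0) ↔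
      ∃ c : Fin d → ℝ, w = Sum.elim (0 : (Fin N × Fin d) → ℝ) (fun p => c p.2) := by
  subst hbAtil hF₀ hB₀
  intro w
  rw [vecMul_fromBlocks_sub_one_and_fromRows_eq_zero_iff, vecMul_kronecker_one_eq_self_iff]
  simp only [Function.comp_apply, vecMul_eq_self_iff_exists_const Atil hcol hAtilsimple]
  rw [exists_eq_sumElim_zero_iff]

/-- With F₀ = [[A⊗I, 0],[(Ã⊗I − I)C, Ã⊗I]] and B₀ = [I; 0], where A is row
stochastic with 1 a (left-)simple eigenvalue, Ã is column stochastic with 1 a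
(left-)simple eigenvalue and C is invertible, a row vector w satisfies
w(F₀ − I) = 0 and wB₀ = 0 if and only if it is a linear combination of the
rows of [0, 𝟏ᵀ⊗I_d]; so the left kernel of [F₀ − I, B₀] has dimension d. -/
theorem stmt8 (N d : ℕ)
    (A Atil : Matrix (Fin N) (Fin N) ℝ)
    (hrow : ∀ i, ∑ j, A i j = 1)
    (hcol : ∀ j, ∑ i, Atil i j = 1)
    (hAsimple : ∀ v : Fin N → ℝ, Matrix.vecMul v A = v →
      ∃ c : ℝ, v = fun _ => c)
    (hAtilsimple : ∀ v : Fin N → ℝ, Matrix.vecMul v Atil = v →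
      ∃ c : ℝ, v = fun _ => c)
    (C : Matrix (Fin N × Fin d) (Fin N × Fin d) ℝ)
    (hC : IsUnit C)
    (bA bAtil : Matrix (Fin N × Fin d) (Fin N × Fin d) ℝ)
    (hbA : bA = A ⊗ₖ (1 : Matrix (Fin d) (Fin d) ℝ))
    (hbAtil : bAtil = Atil ⊗ₖ (1 : Matrix (Fin d) (Fin d) ℝ))
    (F₀ : Matrix ((Fin N × Fin d) ⊕ (Fin N × Fin d))
        ((Fin N × Fin d) ⊕ (Fin N × Fin d)) ℝ)
    (hF₀ : F₀ = Matrix.fromBlocks bA 0 ((bAtil - 1) * C) bAtil)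
    (B₀ : Matrix ((Fin N × Fin d) ⊕ (Fin N × Fin d)) (Fin N × Fin d) ℝ)
    (hB₀ : B₀ = Matrix.fromRows 1 0) :
    ∀ w : ((Fin N × Fin d) ⊕ (Fin N × Fin d)) → ℝ,
      (Matrix.vecMul w (F₀ - 1) = 0 ∧ Matrix.vecMul w B₀ = 0) ↔
      ∃ c : Fin d → ℝ, w = Sum.elim (0 : (Fin N × Fin d) → ℝ) (fun p => c p.2) :=
  stmt8_general N d Atil hcol hAtilsimple C bA bAtil hbAtil F₀ hF₀ B₀ hB₀
end

section
/- Consider F = [[𝐀 + K_y C, K_z], [(𝐀̃ − I)C, 𝐀̃]] and G = [K_y Q; (𝐀̃ − I)Q] with K_z = K_y. Setting Π_x = 𝐈Σ and Π_z = −C𝐈Σ − Q, where Σ = (Σᵢ Cᵢ)⁻¹ Σᵢ CᵢΓᵢ, Q = col(−C₁Γ₁,...,−C_NΓ_N), C = diag(C₁,...,C_N), 𝐈 = 𝟏_N ⊗ I_d, the matrix Π = [Π_x; Π_z] satisfies the regulator equations Π = FΠ + G and [I, 0]Π = 𝐈Σ. -/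
/-!
The top block of `Π = FΠ + G` reduces, once the `K_y` terms cancel, to `𝐀𝐈 = 𝐈`, which holds
because `𝐈 = 𝟏_N ⊗ I_d` and `A𝟏 = 𝟏`; in the bottom block the `𝐀̃` terms cancel identically.
-/

open Matrix Kronecker

namespace Matrix

variable {R ι κ m n k : Type*}

theorem kronecker_one_mul_of_snd [NonAssocSemiring R] [Fintype m] [Fintype n] [DecidableEq n]
    (A : Matrix m m R) (hA : ∀ i, ∑ j, A i j = 1) (B : Matrix n k R) :
    A ⊗ₖ (1 : Matrix n n R) * (of fun q c => B q.2 c : Matrix (m × n) k R) =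
      of fun q c => B q.2 c := by
  ext ⟨i, a⟩ c
  simp only [mul_apply, kroneckerMap_apply, of_apply, Fintype.sum_prod_type, one_apply, mul_ite,
    mul_one, mul_zero, ite_mul, zero_mul, Finset.sum_ite_eq, Finset.mem_univ, if_true,
    ← Finset.sum_mul, hA, one_mul]

theorem fromRows_add_fromRows [Add R] {m₁ m₂ : Type*} (X₁ Y₁ : Matrix m₁ n R)
    (X₂ Y₂ : Matrix m₂ n R) :
    fromRows X₁ X₂ + fromRows Y₁ Y₂ = fromRows (X₁ + Y₁) (X₂ + Y₂) := by
  ext (i | i) c <;> rfl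

theorem fromCols_one_zero_mul_fromRows [Semiring R] {m₁ m₂ : Type*} [Fintype m₁]
    [Fintype m₂] [DecidableEq m₁] (X : Matrix m₁ n R) (Y : Matrix m₂ n R) :
    fromCols (1 : Matrix m₁ m₁ R) (0 : Matrix m₁ m₂ R) * fromRows X Y = X := by
  rw [Matrix.fromCols_mul_fromRows, Matrix.one_mul, Matrix.zero_mul, add_zero]

theorem fromRows_eq_fromBlocks_mul_add_of_mul_eq_self [Ring R] [Fintype ι] [DecidableEq ι]
    [Fintype κ] {Ab Ãb K C : Matrix ι ι R} {P : Matrix ι κ R} (S : Matrix κ n R)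
    (Q : Matrix ι n R) (hP : Ab * P = P) :
    fromRows (P * S) (-(C * P * S) - Q) =
      fromBlocks (Ab + K * C) K ((Ãb - 1) * C) Ãb * fromRows (P * S) (-(C * P * S) - Q) +
        fromRows (K * Q) ((Ãb - 1) * Q) := by
  rw [fromBlocks_mul_fromRows, fromRows_add_fromRows, fromRows_ext_iff]
  constructor
  · rw [Matrix.add_mul, ← Matrix.mul_assoc Ab, hP]
    simp only [Matrix.mul_sub, Matrix.mul_neg, Matrix.mul_assoc]
    abel
  · simp only [Matrix.sub_mul, Matrix.mul_sub, Matrix.mul_neg, Matrix.one_mul, Matrix.mul_assoc]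
    abel

end Matrix

theorem stmt9_general (N d p : ℕ)
    (A : Matrix (Fin N) (Fin N) ℝ)
    (hrow : ∀ i, ∑ j, A i j = 1)
    (bA bAtil : Matrix (Fin N × Fin d) (Fin N × Fin d) ℝ)
    (hbA : bA = A ⊗ₖ (1 : Matrix (Fin d) (Fin d) ℝ))
    (Ky Kz : Matrix (Fin N × Fin d) (Fin N × Fin d) ℝ)
    (hKzKy : Kz = Ky)
    (C : Matrix (Fin N × Fin d) (Fin N × Fin d) ℝ)
    (Q : Matrix (Fin N × Fin d) (Fin p) ℝ)
    (bI : Matrix (Fin N × Fin d) (Fin d) ℝ)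
    (hbI : bI = Matrix.of fun q c => if q.2 = c then (1 : ℝ) else 0)
    (Sm : Matrix (Fin d) (Fin p) ℝ)
    (F : Matrix ((Fin N × Fin d) ⊕ (Fin N × Fin d))
        ((Fin N × Fin d) ⊕ (Fin N × Fin d)) ℝ)
    (hF : F = Matrix.fromBlocks (bA + Ky * C) Kz ((bAtil - 1) * C) bAtil)
    (G : Matrix ((Fin N × Fin d) ⊕ (Fin N × Fin d)) (Fin p) ℝ)
    (hG : G = Matrix.fromRows (Ky * Q) ((bAtil - 1) * Q))
    (Pim : Matrix ((Fin N × Fin d) ⊕ (Fin N × Fin d)) (Fin p) ℝ)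
    (hPi : Pim = Matrix.fromRows (bI * Sm) (-(C * bI * Sm) - Q)) :
    Pim = F * Pim + G ∧ Matrix.fromCols 1 0 * Pim = bI * Sm := by
  have hbAbI : bA * bI = bI := by
    subst hbA hbI
    exact kronecker_one_mul_of_snd A hrow 1
  subst hF hG hPi hKzKy
  exact ⟨fromRows_eq_fromBlocks_mul_add_of_mul_eq_self Sm Q hbAbI,
    fromCols_one_zero_mul_fromRows _ _⟩

/-- With K_z = K_y, the matrix Pim = [𝐈Σ; −C𝐈Σ − Q] solves the regulator
equations Pim = FPim + G and [I, 0]Pim = 𝐈Σ for the gradient tracking closed loop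
F = [[𝐀 + K_yC, K_z],[(𝐀̃ − I)C, 𝐀̃]], G = [K_yQ; (𝐀̃ − I)Q]. -/
theorem stmt9 (N d p : ℕ)
    (Cloc : Fin N → Matrix (Fin d) (Fin d) ℝ)
    (hCloc : ∀ i, (Cloc i).PosDef)
    (Γ : Fin N → Matrix (Fin d) (Fin p) ℝ)
    (A Atil : Matrix (Fin N) (Fin N) ℝ)
    (hrow : ∀ i, ∑ j, A i j = 1)
    (hcol : ∀ j, ∑ i, Atil i j = 1)
    (bA bAtil : Matrix (Fin N × Fin d) (Fin N × Fin d) ℝ)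
    (hbA : bA = A ⊗ₖ (1 : Matrix (Fin d) (Fin d) ℝ))
    (hbAtil : bAtil = Atil ⊗ₖ (1 : Matrix (Fin d) (Fin d) ℝ))
    (Ky Kz : Matrix (Fin N × Fin d) (Fin N × Fin d) ℝ)
    (hKzKy : Kz = Ky)
    (C : Matrix (Fin N × Fin d) (Fin N × Fin d) ℝ)
    (hC : C = Matrix.of fun q r => if q.1 = r.1 then Cloc q.1 q.2 r.2 else 0)
    (Q : Matrix (Fin N × Fin d) (Fin p) ℝ)
    (hQ : Q = Matrix.of fun q c => (-(Cloc q.1 * Γ q.1)) q.2 c)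
    (bI : Matrix (Fin N × Fin d) (Fin d) ℝ)
    (hbI : bI = Matrix.of fun q c => if q.2 = c then (1 : ℝ) else 0)
    (Sm : Matrix (Fin d) (Fin p) ℝ)
    (hSm : Sm = (∑ i, Cloc i)⁻¹ * ∑ i, Cloc i * Γ i)
    (F : Matrix ((Fin N × Fin d) ⊕ (Fin N × Fin d))
        ((Fin N × Fin d) ⊕ (Fin N × Fin d)) ℝ)
    (hF : F = Matrix.fromBlocks (bA + Ky * C) Kz ((bAtil - 1) * C) bAtil)
    (G : Matrix ((Fin N × Fin d) ⊕ (Fin N × Fin d)) (Fin p) ℝ)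
    (hG : G = Matrix.fromRows (Ky * Q) ((bAtil - 1) * Q))
    (Pim : Matrix ((Fin N × Fin d) ⊕ (Fin N × Fin d)) (Fin p) ℝ)
    (hPi : Pim = Matrix.fromRows (bI * Sm) (-(C * bI * Sm) - Q)) :
    Pim = F * Pim + G ∧ Matrix.fromCols 1 0 * Pim = bI * Sm :=
  stmt9_general N d p A hrow bA bAtil hbA Ky Kz hKzKy C Q bI hbI Sm F hF G hG Pim hPi
end
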